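/- Let r ≥ 3 be an integer. Then there exist polynomials A and B in r−1 variables such that, in ℂ[p₁,…,p_r], Σ_{k=1}^r p_k^{2r−2} = (r−1)·z_{r−1}² + z_{r−1}·B(z₁,…,z_{r−2},z_r) + A(z₁,…,z_{r−2},z_r). (In other words, when the power sum of degree 2r−2 is expressed through the generators z₁,…,z_r of the ring of symmetric polynomials, the coefficient of (z_{r−1})² equals r−1 and no higher power of z_{r−1} occurs.) -/

import Mathlib

open MvPolynomial

/-- Normalized power sums `z_i = (1/i) Σ_{k=1}^r p_k^i` in `ℂ[p₁,…,p_r]`. -/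
noncomputable def zPol (r : ℕ) (i : ℕ) : MvPolynomial (Fin r) ℂ :=
  C ((1 : ℂ) / (i : ℂ)) * ∑ k : Fin r, (X k) ^ i

/-- The substitution variables `(z₁, …, z_{r−2}, z_r)` (omitting `z_{r−1}`). -/
noncomputable def zVars (r : ℕ) : Fin (r - 1) → MvPolynomial (Fin r) ℂ :=
  fun m => if (m : ℕ) < r - 2 then zPol r ((m : ℕ) + 1) else zPol r r

/-!
By Newton's identities every power sum `p_n = ∑ p_k ^ n` is a polynomial in `z₁, …, z_r` that is
weighted homogeneous of weight `n` when `z_i` is given weight `i`. For `n = 2 (r - 1)`, a monomial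
of that weight contains `z_{r-1}` at most twice, and `z_{r-1} ^ 2` only on its own, so
`p_{2r-2} = c z_{r-1} ^ 2 + z_{r-1} B + A` with `A`, `B` of positive weight in the other generators.
At the point whose coordinates are the `(r-1)`-th roots of unity and `0`, every `z_i` with
`r - 1 ∤ i` vanishes while `z_{r-1} = 1` and `p_{2r-2} = r - 1`; hence `c = r - 1`.
-/

namespace MvPolynomial

theorem IsWeightedHomogeneous.aeval_zero {σ R S : Type*} [CommSemiring R]
    [CommSemiring S] [Algebra R S] {w : σ → ℕ} {φ : MvPolynomial σ R} {n : ℕ}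
    (hφ : φ.IsWeightedHomogeneous w n) (hn : n ≠ 0) : aeval (0 : σ → S) φ = 0 := by
  rw [MvPolynomial.aeval_zero, constantCoeff_eq, hφ.coeff_eq_zero 0 (by simpa using hn.symm),
    map_zero]

theorem esymm_eq_zero_of_card_lt {σ R : Type*} [Fintype σ] [CommSemiring R] {n : ℕ}
    (h : Fintype.card σ < n) : esymm σ R n = 0 := by
  rw [esymm, Finset.powersetCard_eq_empty.2 (by rwa [Finset.card_univ]), Finset.sum_empty]

section WeightedImage

variable (R : Type*) {σ S : Type*} [CommSemiring R] [CommSemiring S] [Algebra R S]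

noncomputable def weightedHomogeneousImage (v : σ → S) (w : σ → ℕ) (n : ℕ) : Submodule R S :=
  (weightedHomogeneousSubmodule R w n).map (aeval v).toLinearMap

variable {R} {v : σ → S} {w : σ → ℕ}

theorem mem_weightedHomogeneousImage {n : ℕ} {a : S} :
    a ∈ weightedHomogeneousImage R v w n ↔
      ∃ q : MvPolynomial σ R, q.IsWeightedHomogeneous w n ∧ aeval v q = a :=
  Iff.rfl

theorem one_mem_weightedHomogeneousImage : (1 : S) ∈ weightedHomogeneousImage R v w 0 :=
  ⟨1, isWeightedHomogeneous_one R w, map_one (aeval v)⟩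

theorem mul_mem_weightedHomogeneousImage {m n : ℕ} {a b : S}
    (ha : a ∈ weightedHomogeneousImage R v w m) (hb : b ∈ weightedHomogeneousImage R v w n) :
    a * b ∈ weightedHomogeneousImage R v w (m + n) := by
  obtain ⟨p, hp, rfl⟩ := ha
  obtain ⟨q, hq, rfl⟩ := hb
  exact ⟨p * q, hp.mul hq, map_mul (aeval v) p q⟩

theorem algebraMap_mul_mem_weightedHomogeneousImage {n : ℕ} {a : S} (c : R)
    (ha : a ∈ weightedHomogeneousImage R v w n) :
    algebraMap R S c * a ∈ weightedHomogeneousImage R v w n := by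
  rw [← Algebra.smul_def]
  exact Submodule.smul_mem _ c ha

end WeightedImage

theorem neg_one_pow_mul_mem_weightedHomogeneousImage {σ R S : Type*} [CommRing R] [CommRing S]
    [Algebra R S] {v : σ → S} {w : σ → ℕ} {n : ℕ} {a : S} (j : ℕ)
    (ha : a ∈ weightedHomogeneousImage R v w n) :
    (-1) ^ j * a ∈ weightedHomogeneousImage R v w n := by
  have := algebraMap_mul_mem_weightedHomogeneousImage ((-1) ^ j) ha
  rwa [map_pow, map_neg, map_one] at this

section Newton

variable {σ τ K : Type*} [Fintype τ] [Field K] [CharZero K] {v : σ → MvPolynomial τ K}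
  {w : σ → ℕ}

local notation "W" => weightedHomogeneousImage K v w

theorem esymm_mem_weightedHomogeneousImage
    (h : ∀ k, 0 < k → k ≤ Fintype.card τ → psum τ K k ∈ W k) (n : ℕ) :
    esymm τ K n ∈ W n := by
  induction n using Nat.strong_induction_on with
  | _ n ih =>
    rcases Nat.eq_zero_or_pos n with rfl | hn
    · rw [esymm_zero]; exact one_mem_weightedHomogeneousImage
    by_cases hnτ : Fintype.card τ < n
    · rw [esymm_eq_zero_of_card_lt hnτ]; exact Submodule.zero_mem _
    have newton := mul_esymm_eq_sum τ K n
    rw [show (n : MvPolynomial τ K) = algebraMap K _ n by simp, ← Algebra.smul_def,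
      ← eq_inv_smul_iff₀ (Nat.cast_ne_zero.2 hn.ne')] at newton
    rw [newton]
    refine Submodule.smul_mem _ _ (neg_one_pow_mul_mem_weightedHomogeneousImage _
      (Submodule.sum_mem _ fun a ha => ?_))
    rw [Finset.mem_filter, Finset.HasAntidiagonal.mem_antidiagonal] at ha
    rw [mul_assoc, ← ha.1]
    exact neg_one_pow_mul_mem_weightedHomogeneousImage _ <|
      mul_mem_weightedHomogeneousImage (ih _ ha.2) (h _ (by omega) (by omega))

theorem psum_mem_weightedHomogeneousImage
    (h : ∀ k, 0 < k → k ≤ Fintype.card τ → psum τ K k ∈ W k) (n : ℕ) (hn : 0 < n) :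
    psum τ K n ∈ W n := by
  induction n using Nat.strong_induction_on with
  | _ n ih =>
    rw [psum_eq_mul_esymm_sub_sum τ K n hn, mul_assoc]
    refine Submodule.sub_mem _ (neg_one_pow_mul_mem_weightedHomogeneousImage _ ?_)
      (Submodule.sum_mem _ fun a ha => ?_)
    · rw [show (n : MvPolynomial τ K) = algebraMap K _ n by simp]
      exact algebraMap_mul_mem_weightedHomogeneousImage _ (esymm_mem_weightedHomogeneousImage h n)
    rw [Finset.mem_filter, Finset.HasAntidiagonal.mem_antidiagonal, Set.mem_Ioo] at ha
    rw [mul_assoc, ← ha.1]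
    exact neg_one_pow_mul_mem_weightedHomogeneousImage _ <| mul_mem_weightedHomogeneousImage
      (esymm_mem_weightedHomogeneousImage h _) (ih _ (by omega) (by omega))

end Newton

section OptionDecomposition

variable {σ R : Type*} [CommSemiring R] {w : Option σ → ℕ}

theorem weight_optionElim (k : ℕ) (d : σ →₀ ℕ) :
    Finsupp.weight w (d.optionElim k) = k * w none + Finsupp.weight (w ∘ some) d := by
  simp [Finsupp.weight, Finsupp.linearCombination_option, Finsupp.some_optionElim]

theorem IsWeightedHomogeneous.weight_of_mem_support_optionEquivLeft_coeff
    {q : MvPolynomial (Option σ) R} {n : ℕ} (hq : q.IsWeightedHomogeneous w n) {k : ℕ}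
    {d : σ →₀ ℕ} (hd : d ∈ ((optionEquivLeft R σ q).coeff k).support) :
    k * w none + Finsupp.weight (w ∘ some) d = n := by
  rw [mem_support_coeff_optionEquivLeft, mem_support_iff] at hd
  rw [← weight_optionElim]
  exact hq hd

theorem optionEquivLeft_symm_monomial (k : ℕ) (a : MvPolynomial σ R) :
    (optionEquivLeft R σ).symm (Polynomial.monomial k a) = rename some a * X none ^ k := by
  rw [← Polynomial.C_mul_X_pow_eq_monomial, map_mul, map_pow, optionEquivLeft_symm_X,
    optionEquivLeft_symm_apply, Polynomial.aevalTower_C]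

theorem IsWeightedHomogeneous.exists_eq_C_mul_X_none_sq_add (hw : ∀ i, w i ≠ 0)
    {q : MvPolynomial (Option σ) R} (hq : q.IsWeightedHomogeneous w (2 * w none)) :
    ∃ (c : R) (A B : MvPolynomial σ R), A.IsWeightedHomogeneous (w ∘ some) (2 * w none) ∧
      B.IsWeightedHomogeneous (w ∘ some) (w none) ∧
      q = C c * X none ^ 2 + X none * rename some B + rename some A := by
  set P := optionEquivLeft R σ q
  have hP {k : ℕ} {d : σ →₀ ℕ} (hd : d ∈ (P.coeff k).support) :
      k * w none + Finsupp.weight (w ∘ some) d = 2 * w none :=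
    hq.weight_of_mem_support_optionEquivLeft_coeff hd
  have hhom {k m : ℕ} (hkm : k * w none + m = 2 * w none) :
      (P.coeff k).IsWeightedHomogeneous (w ∘ some) m := fun d hd => by
    have := hP (mem_support_iff.2 hd)
    omega
  have hdeg : P.natDegree < 3 := by
    refine Nat.lt_succ_of_le (Polynomial.natDegree_le_iff_coeff_eq_zero.2 fun k hk => ?_)
    by_contra hne
    obtain ⟨d, hd⟩ := support_nonempty.2 hne
    have := hP hd
    have : 3 * w none ≤ k * w none := Nat.mul_le_mul_right _ (by exact_mod_cast hk)
    have := hw none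
    omega
  obtain ⟨c, hc⟩ : ∃ c, P.coeff 2 = C c := by
    refine ⟨coeff 0 (P.coeff 2), ?_⟩
    rw [← weightedHomogeneousComponent_zero (w := w ∘ some) _ fun i => hw (some i),
      (hhom (by ring : 2 * w none + 0 = 2 * w none)).weightedHomogeneousComponent_same]
  refine ⟨c, P.coeff 0, P.coeff 1, hhom (by ring), hhom (by ring), ?_⟩
  have hq_eq :
      q = (optionEquivLeft R σ).symm (∑ k ∈ Finset.range 3, .monomial k (P.coeff k)) := by
    rw [← Polynomial.as_sum_range' P 3 hdeg, AlgEquiv.symm_apply_apply]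
  rw [hq_eq]
  simp only [Finset.sum_range_succ, Finset.sum_range_zero, map_add, map_zero,
    optionEquivLeft_symm_monomial, hc, rename_C]
  ring

end OptionDecomposition

end MvPolynomial

theorem IsPrimitiveRoot.sum_range_pow_pow {K : Type*} [Field K] {ζ : K} {n : ℕ}
    (hζ : IsPrimitiveRoot ζ n) (i : ℕ) :
    ∑ k ∈ Finset.range n, (ζ ^ i) ^ k = if n ∣ i then (n : K) else 0 := by
  split_ifs with hi
  · simp [(hζ.pow_eq_one_iff_dvd i).2 hi]
  · rw [geom_sum_eq (mt (hζ.pow_eq_one_iff_dvd i).1 hi), ← pow_mul, mul_comm, pow_mul,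
      hζ.pow_eq_one, one_pow, sub_self, zero_div]

/-- `zIndex r x = i` when the variable `x` stands for `z_i`: `none` for `z_{r-1}`, `some m` for
`zVars r m`. -/
def zIndex (r : ℕ) : Option (Fin (r - 1)) → ℕ
  | none => r - 1
  | some m => if (m : ℕ) < r - 2 then m + 1 else r

theorem zPol_comp_zIndex_comp_some (r : ℕ) : zPol r ∘ zIndex r ∘ some = zVars r := by
  ext1 m
  simp only [Function.comp_apply, zIndex, zVars, apply_ite (zPol r)]

theorem zIndex_ne_zero {r : ℕ} (hr : 2 ≤ r) (x : Option (Fin (r - 1))) : zIndex r x ≠ 0 := by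
  rcases x with _ | m <;> simp only [zIndex] <;> (try split_ifs) <;> omega

theorem exists_zIndex_eq {r k : ℕ} (hr : 2 ≤ r) (hk : 0 < k) (hkr : k ≤ r) :
    ∃ x : Option (Fin (r - 1)), zIndex r x = k := by
  rcases lt_trichotomy k (r - 1) with h | h | h
  · refine ⟨some ⟨k - 1, by omega⟩, ?_⟩
    simp only [zIndex]
    split_ifs <;> omega
  · exact ⟨none, h.symm⟩
  · refine ⟨some ⟨r - 2, by omega⟩, ?_⟩
    simp only [zIndex]
    split_ifs <;> omega

theorem not_dvd_zIndex_some {r : ℕ} (hr : 3 ≤ r) (m : Fin (r - 1)) :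
    ¬ r - 1 ∣ zIndex r (some m) := by
  simp only [zIndex]
  split_ifs with h
  · exact Nat.not_dvd_of_pos_of_lt (by omega) (by omega)
  · rw [show r = r - 1 + 1 by omega, Nat.add_sub_cancel, Nat.dvd_add_right dvd_rfl,
      Nat.dvd_one]
    omega

theorem psum_mem_weightedHomogeneousImage_zPol {r : ℕ} (hr : 2 ≤ r) {n : ℕ} (hn : 0 < n) :
    psum (Fin r) ℂ n ∈ weightedHomogeneousImage ℂ (zPol r ∘ zIndex r) (zIndex r) n := by
  refine psum_mem_weightedHomogeneousImage (fun k hk hkr => ?_) n hn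
  obtain ⟨x, hx⟩ := exists_zIndex_eq hr hk (by simpa using hkr)
  refine mem_weightedHomogeneousImage.2
    ⟨C (k : ℂ) * X x, hx ▸ (isWeightedHomogeneous_X ℂ _ x).C_mul _, ?_⟩
  rw [map_mul, aeval_C, aeval_X, Function.comp_apply, hx, zPol, algebraMap_eq, ← mul_assoc,
    ← C_mul, mul_one_div_cancel (Nat.cast_ne_zero.2 hk.ne'), C_1, one_mul]
  rfl

def rootsOfUnityPoint (r : ℕ) (ζ : ℂ) : Fin r → ℂ :=
  fun k => if (k : ℕ) < r - 1 then ζ ^ (k : ℕ) else 0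

theorem sum_rootsOfUnityPoint_pow {r : ℕ} {ζ : ℂ} (hζ : IsPrimitiveRoot ζ (r - 1)) {i : ℕ}
    (hi : i ≠ 0) :
    ∑ k, rootsOfUnityPoint r ζ k ^ i = if r - 1 ∣ i then ((r - 1 : ℕ) : ℂ) else 0 := by
  rw [← hζ.sum_range_pow_pow i]
  rcases r with _ | r
  · simp
  simp only [rootsOfUnityPoint, Nat.add_sub_cancel]
  rw [Fin.sum_univ_eq_sum_range (fun k => (if k < r then ζ ^ k else 0) ^ i),
    Finset.sum_range_succ, if_neg (lt_irrefl r), zero_pow hi, add_zero]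
  refine Finset.sum_congr rfl fun k hk => ?_
  rw [if_pos (Finset.mem_range.1 hk), pow_right_comm]

theorem aeval_rootsOfUnityPoint_psum {r : ℕ} {ζ : ℂ} (hζ : IsPrimitiveRoot ζ (r - 1)) {i : ℕ}
    (hi : i ≠ 0) : aeval (rootsOfUnityPoint r ζ) (psum (Fin r) ℂ i) =
      if r - 1 ∣ i then ((r - 1 : ℕ) : ℂ) else 0 := by
  simp only [psum, map_sum, map_pow, aeval_X, sum_rootsOfUnityPoint_pow hζ hi]

theorem aeval_rootsOfUnityPoint_zPol {r : ℕ} {ζ : ℂ} (hζ : IsPrimitiveRoot ζ (r - 1)) {i : ℕ}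
    (hi : i ≠ 0) : aeval (rootsOfUnityPoint r ζ) (zPol r i) =
      if r - 1 ∣ i then ((r - 1 : ℕ) : ℂ) / i else 0 := by
  rw [zPol, map_mul, aeval_C, ← psum, aeval_rootsOfUnityPoint_psum hζ hi,
    Algebra.algebraMap_self, RingHom.id_apply]
  split_ifs <;> ring

theorem aeval_rootsOfUnityPoint_zVars {r : ℕ} (hr : 3 ≤ r) {ζ : ℂ}
    (hζ : IsPrimitiveRoot ζ (r - 1)) :
    (fun m => aeval (rootsOfUnityPoint r ζ) (zVars r m)) = 0 := by
  ext1 m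
  rw [← zPol_comp_zIndex_comp_some, Function.comp_apply, Function.comp_apply,
    aeval_rootsOfUnityPoint_zPol hζ (zIndex_ne_zero (by omega) _),
    if_neg (not_dvd_zIndex_some hr m), Pi.zero_apply]

theorem power_sum_quadratic_in_z_rm1 (r : ℕ) (hr : 3 ≤ r) :
    ∃ A B : MvPolynomial (Fin (r - 1)) ℂ,
      (∑ k : Fin r, (X k : MvPolynomial (Fin r) ℂ) ^ (2 * r - 2)) =
        C ((r : ℂ) - 1) * (zPol r (r - 1)) ^ 2 +
          zPol r (r - 1) * (MvPolynomial.aeval (zVars r) B) +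
          MvPolynomial.aeval (zVars r) A := by
  have hweight : 2 * r - 2 = 2 * zIndex r none := by simp only [zIndex]; omega
  obtain ⟨q, hq, hq_psum⟩ := mem_weightedHomogeneousImage.1 <|
    psum_mem_weightedHomogeneousImage_zPol (by omega : 2 ≤ r) (n := 2 * r - 2) (by omega)
  rw [hweight] at hq
  have hw := zIndex_ne_zero (r := r) (by omega)
  obtain ⟨c, A, B, hA, hB, rfl⟩ := hq.exists_eq_C_mul_X_none_sq_add hw
  have hpsum : psum (Fin r) ℂ (2 * r - 2) =
      C c * zPol r (r - 1) ^ 2 + zPol r (r - 1) * aeval (zVars r) B + aeval (zVars r) A := by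
    rw [← hq_psum, ← zPol_comp_zIndex_comp_some]
    simp only [map_add, map_mul, map_pow, aeval_C, aeval_X, aeval_rename, algebraMap_eq]
    rfl
  obtain ⟨ζ, hζ⟩ : ∃ ζ : ℂ, IsPrimitiveRoot ζ (r - 1) :=
    ⟨_, Complex.isPrimitiveRoot_exp (r - 1) (by omega)⟩
  have hc : c = r - 1 := by
    have h := congrArg (aeval (rootsOfUnityPoint r ζ)) hpsum
    simp only [map_add, map_mul, map_pow, aeval_C, Algebra.algebraMap_self, RingHom.id_apply,
      comp_aeval_apply, aeval_rootsOfUnityPoint_zVars hr hζ, hA.aeval_zero (by simp [hw]),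
      hB.aeval_zero (hw none), aeval_rootsOfUnityPoint_psum hζ (by omega : 2 * r - 2 ≠ 0),
      aeval_rootsOfUnityPoint_zPol hζ (by omega : r - 1 ≠ 0)] at h
    rw [if_pos ⟨2, by omega⟩, if_pos dvd_rfl, div_self (Nat.cast_ne_zero.2 (by omega)),
      Nat.cast_sub (by omega), Nat.cast_one] at h
    linear_combination -h
  exact ⟨A, B, hc ▸ hpsum⟩
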